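/- For each positive integer m, the equation √m · √( (√(2/π) · (1−λ) · t(m) · E(W_m) / λ)^{2/(m+2)} − 1 ) = t(m) has a unique solution λ(m) ∈ (0,1), where t(m) is the two-sided 1−α quantile of the t_m distribution and E(W_m) = E(√(Q/m)) with Q ~ χ²_m. Moreover, lim_{m→∞} λ(m) exists and lies in (0,1). -/

import Mathlib

/-!
Solving the defining equation gives `λ(m) = c / (c + (1 + t(m)² / m) ^ ((m + 2) / 2))` with
`c = √(2/π) t(m) E(W_m)`, which lies in `(0, 1)`; this settles existence and uniqueness.

For the limit, `E(W_m) = Γ(x + 1/2) / (√x Γ(x))` at `x = m/2`, and log-convexity of `Γ` squeezes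
this ratio between `√(x / (x + 1/2))` and `1`, so `E(W_m) → 1`. The same ratio is the normalising
constant of the `t_m` density, so these densities converge pointwise, under a uniform bound, to the
standard normal density. The central masses `∫_{-a}^{a}` are monotone in `a` and converge to the
strictly increasing normal ones, which forces `t(m) → z` with `P(|Z| < z) = 1 - α`. Hence
`λ(m) → √(2/π) z / (√(2/π) z + exp (z² / 2))`, again in `(0, 1)`.
-/

open MeasureTheory Real Set Filter

/-- Density of the chi-squared distribution with `m` degrees of freedom. -/
noncomputable def chisqPDF (m : ℕ) (q : ℝ) : ℝ :=
  if 0 < q then q ^ ((m : ℝ) / 2 - 1) * Real.exp (-q / 2) /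
    (2 ^ ((m : ℝ) / 2) * Real.Gamma ((m : ℝ) / 2)) else 0

/-- Density of `W = sqrt(Q/m)` where `Q ~ χ²_m`. -/
noncomputable def fW (m : ℕ) (w : ℝ) : ℝ := 2 * m * w * chisqPDF m (m * w ^ 2)

/-- `E(W_m)` for `W_m = sqrt(Q/m)`, `Q ~ χ²_m`. -/
noncomputable def EW (m : ℕ) : ℝ := ∫ w in Set.Ioi (0 : ℝ), w * fW m w

/-- Density of the Student t distribution with `m` degrees of freedom. -/
noncomputable def tPDF (m : ℕ) (x : ℝ) : ℝ :=
  Real.Gamma (((m : ℝ) + 1) / 2) / (Real.sqrt (m * Real.pi) * Real.Gamma ((m : ℝ) / 2)) *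
    (1 + x ^ 2 / m) ^ (-(((m : ℝ) + 1) / 2))

/-- The defining equation for `λ(m)`. -/
def lamEq (m : ℕ) (tm l : ℝ) : Prop :=
  Real.sqrt m *
      Real.sqrt ((Real.sqrt (2 / Real.pi) * (1 - l) * tm * EW m / l)
          ^ ((2 : ℝ) / ((m : ℝ) + 2)) - 1) = tm

open Topology ProbabilityTheory

namespace Real

lemma Gamma_midpoint_le_sqrt {x y : ℝ} (hx : 0 < x) (hy : 0 < y) :
    Gamma ((x + y) / 2) ≤ √(Gamma x * Gamma y) := by
  have h := Gamma_mul_add_mul_le_rpow_Gamma_mul_rpow_Gamma hx hy (a := 1 / 2) (b := 1 / 2)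
    (by norm_num) (by norm_num) (by norm_num)
  rwa [← sqrt_eq_rpow, ← sqrt_eq_rpow, ← sqrt_mul (Gamma_pos_of_pos hx).le,
    show 1 / 2 * x + 1 / 2 * y = (x + y) / 2 by ring] at h

lemma Gamma_add_half_le {x : ℝ} (hx : 0 < x) : Gamma (x + 1 / 2) ≤ √x * Gamma x := by
  have h := Gamma_midpoint_le_sqrt hx (show 0 < x + 1 by linarith)
  rwa [Gamma_add_one hx.ne', show (x + (x + 1)) / 2 = x + 1 / 2 by ring,
    show Gamma x * (x * Gamma x) = x * (Gamma x * Gamma x) by ring, sqrt_mul hx.le,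
    sqrt_mul_self (Gamma_pos_of_pos hx).le] at h

lemma mul_Gamma_le {x : ℝ} (hx : 0 < x) : x * Gamma x ≤ √(x + 1 / 2) * Gamma (x + 1 / 2) := by
  have hx' : 0 < x + 1 / 2 := by linarith
  have h := Gamma_midpoint_le_sqrt hx' (show 0 < x + 1 / 2 + 1 by linarith)
  rwa [Gamma_add_one hx'.ne', show (x + 1 / 2 + (x + 1 / 2 + 1)) / 2 = x + 1 by ring,
    Gamma_add_one hx.ne', show Gamma (x + 1 / 2) * ((x + 1 / 2) * Gamma (x + 1 / 2)) =
      (x + 1 / 2) * (Gamma (x + 1 / 2) * Gamma (x + 1 / 2)) by ring, sqrt_mul hx'.le,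
    sqrt_mul_self (Gamma_pos_of_pos hx').le] at h

end Real

noncomputable def gammaHalfRatio (x : ℝ) : ℝ := Gamma (x + 1 / 2) / (√x * Gamma x)

lemma gammaHalfRatio_pos {x : ℝ} (hx : 0 < x) : 0 < gammaHalfRatio x := by
  have := Gamma_pos_of_pos (show 0 < x + 1 / 2 by linarith)
  have := Gamma_pos_of_pos hx
  unfold gammaHalfRatio
  positivity

lemma gammaHalfRatio_le_one {x : ℝ} (hx : 0 < x) : gammaHalfRatio x ≤ 1 :=
  div_le_one_of_le₀ (Gamma_add_half_le hx) (by have := Gamma_pos_of_pos hx; positivity)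

lemma sqrt_div_le_gammaHalfRatio {x : ℝ} (hx : 0 < x) : √(x / (x + 1 / 2)) ≤ gammaHalfRatio x := by
  have hG := Gamma_pos_of_pos hx
  have hs : 0 < √(x + 1 / 2) := sqrt_pos.2 (by linarith)
  rw [gammaHalfRatio, le_div_iff₀ (by positivity), sqrt_div hx.le, div_mul_eq_mul_div,
    div_le_iff₀ hs, ← mul_assoc, mul_self_sqrt hx.le, mul_comm (Gamma _)]
  exact mul_Gamma_le hx

lemma tendsto_gammaHalfRatio_atTop : Tendsto gammaHalfRatio atTop (𝓝 1) := by
  have hfrac : Tendsto (fun x : ℝ => 1 - 1 / 2 / (x + 1 / 2)) atTop (𝓝 1) := by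
    simpa using tendsto_const_nhds.sub
      (tendsto_const_nhds.div_atTop (tendsto_atTop_add_const_right _ (1 / 2 : ℝ) tendsto_id))
  have hlow : Tendsto (fun x : ℝ => √(x / (x + 1 / 2))) atTop (𝓝 1) := by
    have h := hfrac.sqrt
    rw [sqrt_one] at h
    refine h.congr' ?_
    filter_upwards [eventually_gt_atTop 0] with x hx
    congr 1
    field_simp
    ring
  refine tendsto_of_tendsto_of_tendsto_of_le_of_le' hlow tendsto_const_nhds ?_ ?_
  · filter_upwards [eventually_gt_atTop 0] with x hx using sqrt_div_le_gammaHalfRatio hx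
  · filter_upwards [eventually_gt_atTop 0] with x hx using gammaHalfRatio_le_one hx

lemma tendsto_one_add_div_rpow_of_tendsto {a e : ℕ → ℝ} {z c : ℝ}
    (ha : Tendsto a atTop (𝓝 z)) (he : Tendsto (fun m : ℕ => e m / m) atTop (𝓝 c)) :
    Tendsto (fun m : ℕ => (1 + a m / m) ^ e m) atTop (𝓝 (exp (c * z))) := by
  have hlog : Tendsto (fun m : ℕ => (m : ℝ) * log (1 + a m / m)) atTop (𝓝 z) := by
    refine tendsto_nat_mul_log_one_add_of_tendsto (ha.congr' ?_)
    filter_upwards [eventually_ne_atTop 0] with m hm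
    field_simp
  have hbase : ∀ᶠ m : ℕ in atTop, 0 < 1 + a m / m := by
    have h := tendsto_const_nhds (x := (1 : ℝ)).add (ha.div_atTop tendsto_natCast_atTop_atTop)
    rw [add_zero] at h
    exact h.eventually (eventually_gt_nhds one_pos)
  refine (Tendsto.rexp (he.mul hlog)).congr' ?_
  filter_upwards [hbase, eventually_ne_atTop 0] with m hm hm0
  rw [rpow_def_of_pos hm]
  field_simp

lemma tendsto_add_div_two_div_atTop (b : ℝ) :
    Tendsto (fun m : ℕ => ((m : ℝ) + b) / 2 / m) atTop (𝓝 (1 / 2)) := by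
  have h := tendsto_const_nhds (x := (1 / 2 : ℝ)).add
    (tendsto_const_nhds (x := b / 2).div_atTop tendsto_natCast_atTop_atTop)
  rw [add_zero] at h
  refine h.congr' ?_
  filter_upwards [eventually_ne_atTop 0] with m hm
  field_simp

lemma tendsto_of_apply_eq_of_tendsto_apply {ι : Type*} {l : Filter ι} {F : ι → ℝ → ℝ} {G : ℝ → ℝ}
    {t : ι → ℝ} {z : ℝ} (hF : ∀ᶠ i in l, Monotone (F i))
    (hFG : ∀ x, 0 ≤ x → Tendsto (fun i => F i x) l (𝓝 (G x))) (hG : StrictMonoOn G (Ici 0))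
    (hz : 0 < z) (ht : ∀ᶠ i in l, F i (t i) = G z) : Tendsto t l (𝓝 z) := by
  refine tendsto_order.2 ⟨fun a ha => ?_, fun b hb => ?_⟩
  · have ha' : max a 0 < z := max_lt ha hz
    have hGa := hG (le_max_right a 0) hz.le ha'
    filter_upwards [hF, ht, (hFG _ (le_max_right a 0)).eventually_lt_const hGa] with i hmono hti hlt
    exact (le_max_left a 0).trans_lt (hmono.reflect_lt (hti ▸ hlt))
  · have hGb := hG hz.le (hz.trans hb).le hb
    filter_upwards [hF, ht, (hFG _ (hz.trans hb).le).eventually_const_lt hGb] with i hmono hti hlt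
    exact hmono.reflect_lt (hti ▸ hlt)

noncomputable def normalCentralMass (t : ℝ) : ℝ := ∫ x in -t..t, gaussianPDFReal 0 1 x

lemma intervalIntegrable_gaussianPDFReal (a b : ℝ) :
    IntervalIntegrable (gaussianPDFReal 0 1) volume a b :=
  (integrable_gaussianPDFReal 0 1).intervalIntegrable

lemma normalCentralMass_zero : normalCentralMass 0 = 0 := by
  simp [normalCentralMass]

lemma continuous_normalCentralMass : Continuous normalCentralMass := by
  have h := intervalIntegral.continuous_primitive intervalIntegrable_gaussianPDFReal 0
  refine (h.sub (h.comp continuous_neg)).congr fun t => ?_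
  exact intervalIntegral.integral_interval_sub_left (intervalIntegrable_gaussianPDFReal _ _)
    (intervalIntegrable_gaussianPDFReal _ _)

lemma strictMono_normalCentralMass : StrictMono normalCentralMass := by
  intro s t hst
  have hdiff : normalCentralMass t - normalCentralMass s =
      (∫ x in s..t, gaussianPDFReal 0 1 x) + ∫ x in -t..-s, gaussianPDFReal 0 1 x := by
    rw [normalCentralMass, normalCentralMass, intervalIntegral.integral_interval_sub_interval_comm'
      (intervalIntegrable_gaussianPDFReal _ _) (intervalIntegrable_gaussianPDFReal _ _)
      (intervalIntegrable_gaussianPDFReal _ _), intervalIntegral.integral_symm (-t)]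
    ring
  have hpos : 0 < ∫ x in s..t, gaussianPDFReal 0 1 x :=
    intervalIntegral.intervalIntegral_pos_of_pos (intervalIntegrable_gaussianPDFReal _ _)
      (fun x => gaussianPDFReal_pos 0 1 x one_ne_zero) hst
  have hnonneg : 0 ≤ ∫ x in -t..-s, gaussianPDFReal 0 1 x :=
    intervalIntegral.integral_nonneg (by linarith) fun x _ => gaussianPDFReal_nonneg 0 1 x
  linarith

lemma tendsto_normalCentralMass_atTop : Tendsto normalCentralMass atTop (𝓝 1) := by
  rw [← integral_gaussianPDFReal_eq_one 0 one_ne_zero]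
  exact intervalIntegral_tendsto_integral (integrable_gaussianPDFReal 0 1) tendsto_neg_atTop_atBot
    tendsto_id

lemma exists_normalCentralMass_eq {p : ℝ} (hp : p ∈ Ioo (0 : ℝ) 1) :
    ∃ z, 0 < z ∧ normalCentralMass z = p := by
  obtain ⟨T, hT, hT0⟩ := ((tendsto_normalCentralMass_atTop.eventually (eventually_gt_nhds hp.2)).and
    (eventually_ge_atTop 0)).exists
  obtain ⟨z, hz, hGz⟩ := intermediate_value_Icc hT0 continuous_normalCentralMass.continuousOn
    (show p ∈ Icc (normalCentralMass 0) (normalCentralMass T) by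
      rw [normalCentralMass_zero]; exact ⟨hp.1.le, hT.le⟩)
  refine ⟨z, hz.1.lt_of_ne ?_, hGz⟩
  rintro rfl
  rw [normalCentralMass_zero] at hGz
  exact hp.1.ne hGz

lemma setIntegral_Ioo_eq_normalCentralMass {t : ℝ} (ht : 0 ≤ t) :
    ∫ x in Ioo (-t) t, gaussianPDFReal 0 1 x = normalCentralMass t := by
  rw [normalCentralMass, intervalIntegral.integral_of_le (by linarith),
    integral_Ioc_eq_integral_Ioo]

lemma mul_fW_eq {m : ℕ} (hm : 0 < m) {w : ℝ} (hw : 0 < w) :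
    w * fW m w = 2 * ((m : ℝ) / 2) ^ ((m : ℝ) / 2) / Gamma ((m : ℝ) / 2) *
      (w ^ (m : ℝ) * exp (-((m : ℝ) / 2) * w ^ (2 : ℝ))) := by
  have hm' : (0 : ℝ) < m := Nat.cast_pos.2 hm
  have hpow : ((m : ℝ) * w ^ 2) ^ ((m : ℝ) / 2 - 1) =
      (m : ℝ) ^ ((m : ℝ) / 2) / m * (w ^ (m : ℝ) / w ^ 2) := by
    rw [mul_rpow hm'.le (by positivity), rpow_sub hm', rpow_one, ← rpow_natCast w 2,
      ← rpow_mul hw.le, ← rpow_sub hw]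
    norm_num [mul_sub, mul_div_cancel₀]
  rw [fW, chisqPDF, if_pos (by positivity), hpow, div_rpow hm'.le zero_le_two, rpow_two]
  have := Gamma_pos_of_pos (show (0 : ℝ) < m / 2 by positivity)
  field_simp

lemma EW_eq_gammaHalfRatio {m : ℕ} (hm : 0 < m) : EW m = gammaHalfRatio ((m : ℝ) / 2) := by
  have hx : (0 : ℝ) < m / 2 := by positivity
  rw [EW, setIntegral_congr_fun measurableSet_Ioi fun w hw => mul_fW_eq hm hw, integral_const_mul,
    integral_rpow_mul_exp_neg_mul_rpow two_pos (by linarith) hx, gammaHalfRatio,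
    show ((m : ℝ) + 1) / 2 = m / 2 + 1 / 2 by ring,
    show -((m : ℝ) + 1) / 2 = -(m / 2) + -(1 / 2) by ring,
    rpow_add hx, rpow_neg hx.le, rpow_neg hx.le, ← sqrt_eq_rpow]
  have := Gamma_pos_of_pos hx
  have : 0 < ((m : ℝ) / 2) ^ ((m : ℝ) / 2) := by positivity
  field_simp

lemma EW_pos {m : ℕ} (hm : 0 < m) : 0 < EW m := by
  rw [EW_eq_gammaHalfRatio hm]
  exact gammaHalfRatio_pos (by positivity)

lemma tendsto_EW : Tendsto EW atTop (𝓝 1) := by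
  refine (tendsto_gammaHalfRatio_atTop.comp
    (tendsto_natCast_atTop_atTop.atTop_div_const two_pos)).congr' ?_
  filter_upwards [eventually_gt_atTop 0] with m hm
  exact (EW_eq_gammaHalfRatio hm).symm

lemma tPDF_eq {m : ℕ} (hm : 0 < m) (x : ℝ) :
    tPDF m x =
      gammaHalfRatio ((m : ℝ) / 2) / √(2 * π) * (1 + x ^ 2 / m) ^ (-(((m : ℝ) + 1) / 2)) := by
  have hsqrt : √((m : ℝ) * π) = √((m : ℝ) / 2) * √(2 * π) := by
    rw [← sqrt_mul (by positivity)]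
    ring_nf
  rw [tPDF, gammaHalfRatio, hsqrt, show ((m : ℝ) + 1) / 2 = m / 2 + 1 / 2 by ring]
  ring

lemma tPDF_pos {m : ℕ} (hm : 0 < m) (x : ℝ) : 0 < tPDF m x := by
  have := gammaHalfRatio_pos (show (0 : ℝ) < m / 2 by positivity)
  rw [tPDF_eq hm]
  positivity

lemma tPDF_le {m : ℕ} (hm : 0 < m) (x : ℝ) : tPDF m x ≤ (√(2 * π))⁻¹ := by
  have hbase : 1 ≤ 1 + x ^ 2 / m := le_add_of_nonneg_right (by positivity)
  rw [tPDF_eq hm, ← one_div]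
  calc gammaHalfRatio ((m : ℝ) / 2) / √(2 * π) * (1 + x ^ 2 / m) ^ (-(((m : ℝ) + 1) / 2))
      ≤ 1 / √(2 * π) * 1 := by
        gcongr
        · exact gammaHalfRatio_le_one (by positivity)
        · exact rpow_le_one_of_one_le_of_nonpos hbase (neg_nonpos.2 (by positivity))
    _ = 1 / √(2 * π) := mul_one _

lemma tendsto_tPDF (x : ℝ) : Tendsto (fun m : ℕ => tPDF m x) atTop (𝓝 (gaussianPDFReal 0 1 x)) := by
  have hconst : Tendsto (fun m : ℕ => gammaHalfRatio ((m : ℝ) / 2) / √(2 * π)) atTop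
      (𝓝 (1 / √(2 * π))) :=
    (tendsto_gammaHalfRatio_atTop.comp
      (tendsto_natCast_atTop_atTop.atTop_div_const two_pos)).div_const _
  have hpow := tendsto_one_add_div_rpow_of_tendsto (tendsto_const_nhds (x := x ^ 2))
    (e := fun m : ℕ => -(((m : ℝ) + 1) / 2))
    (by simpa only [neg_div] using (tendsto_add_div_two_div_atTop 1).neg)
  refine ((hconst.mul hpow).congr' ?_).trans_eq ?_
  · filter_upwards [eventually_gt_atTop 0] with m hm
    rw [tPDF_eq hm]
  · simp only [gaussianPDFReal, NNReal.coe_one, mul_one, sub_zero, one_div]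
    ring_nf

lemma continuous_tPDF (m : ℕ) : Continuous (tPDF m) :=
  continuous_const.mul <| (continuous_const.add ((continuous_pow 2).div_const _)).rpow_const
    fun x => Or.inl (by positivity : (0 : ℝ) < 1 + x ^ 2 / m).ne'

lemma monotone_setIntegral_Ioo_tPDF {m : ℕ} (hm : 0 < m) :
    Monotone fun a => ∫ x in Ioo (-a) a, tPDF m x := by
  intro a b hab
  refine setIntegral_mono_set ?_ (Eventually.of_forall fun x => (tPDF_pos hm x).le)
    (Ioo_subset_Ioo (neg_le_neg hab) hab).eventuallyLE
  exact (continuous_tPDF m).integrableOn_Icc.mono_set Ioo_subset_Icc_self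

lemma tendsto_setIntegral_Ioo_tPDF {t : ℝ} (ht : 0 ≤ t) :
    Tendsto (fun m : ℕ => ∫ x in Ioo (-t) t, tPDF m x) atTop (𝓝 (normalCentralMass t)) := by
  rw [← setIntegral_Ioo_eq_normalCentralMass ht]
  refine tendsto_integral_filter_of_dominated_convergence (fun _ => (√(2 * π))⁻¹) ?_ ?_
    (integrableOn_const measure_Ioo_lt_top.ne) (Eventually.of_forall fun x => tendsto_tPDF x)
  · exact Eventually.of_forall fun m => (continuous_tPDF m).aestronglyMeasurable
  · filter_upwards [eventually_gt_atTop 0] with m hm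
    exact Eventually.of_forall fun x => (norm_of_nonneg (tPDF_pos hm x).le).trans_le (tPDF_le hm x)

lemma tendsto_of_setIntegral_Ioo_tPDF_eq {t : ℕ → ℝ} {z : ℝ} (hz : 0 < z)
    (ht : ∀ m, 0 < m → ∫ x in Ioo (-t m) (t m), tPDF m x = normalCentralMass z) :
    Tendsto t atTop (𝓝 z) := by
  refine tendsto_of_apply_eq_of_tendsto_apply (F := fun m a => ∫ x in Ioo (-a) a, tPDF m x)
    ?_ (fun x hx => tendsto_setIntegral_Ioo_tPDF hx) (strictMono_normalCentralMass.strictMonoOn _)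
    hz ?_
  · filter_upwards [eventually_gt_atTop 0] with m hm using monotone_setIntegral_Ioo_tPDF hm
  · filter_upwards [eventually_gt_atTop 0] with m hm using ht m hm

lemma sqrt_mul_sqrt_rpow_sub_one_eq_iff {m t X : ℝ} (hm : 0 < m) (ht : 0 < t) (hX : 0 ≤ X) :
    √m * √(X ^ (2 / (m + 2)) - 1) = t ↔ X = (1 + t ^ 2 / m) ^ ((m + 2) / 2) := by
  have hsm : 0 < √m := sqrt_pos.2 hm
  rw [mul_comm, ← eq_div_iff hsm.ne', sqrt_eq_iff_mul_self_eq_of_pos (by positivity),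
    div_mul_div_comm, mul_self_sqrt hm.le, ← sq, ← inv_div (m + 2) 2, eq_sub_iff_add_eq', eq_comm,
    rpow_inv_eq hX (by positivity) (by positivity)]

lemma div_add_mem_Ioo {c b : ℝ} (hc : 0 < c) (hb : 0 < b) : c / (c + b) ∈ Ioo (0 : ℝ) 1 :=
  ⟨by positivity, (div_lt_one (by positivity)).2 (by linarith)⟩

noncomputable def lamSol (m : ℕ) (t : ℝ) : ℝ :=
  √(2 / π) * t * EW m / (√(2 / π) * t * EW m + (1 + t ^ 2 / m) ^ (((m : ℝ) + 2) / 2))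

lemma lamSol_mem_Ioo {m : ℕ} (hm : 0 < m) {t : ℝ} (ht : 0 < t) : lamSol m t ∈ Ioo (0 : ℝ) 1 :=
  div_add_mem_Ioo (by have := EW_pos hm; positivity) (by positivity)

lemma lamEq_iff {m : ℕ} (hm : 0 < m) {t l : ℝ} (ht : 0 < t) (hl : l ∈ Ioo (0 : ℝ) 1) :
    lamEq m t l ↔ l = lamSol m t := by
  have hc : 0 < √(2 / π) * t * EW m := by have := EW_pos hm; positivity
  have hB : 0 < (1 + t ^ 2 / m) ^ (((m : ℝ) + 2) / 2) := by positivity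
  rw [lamEq, sqrt_mul_sqrt_rpow_sub_one_eq_iff (by positivity) ht
    (div_nonneg (by nlinarith [hl.2]) hl.1.le), div_eq_iff hl.1.ne', lamSol,
    eq_div_iff (by positivity)]
  constructor <;> intro h <;> linear_combination (-1 : ℝ) * h

lemma tendsto_lamSol {t : ℕ → ℝ} {z : ℝ} (hz : 0 ≤ z) (ht : Tendsto t atTop (𝓝 z)) :
    Tendsto (fun m => lamSol m (t m)) atTop
      (𝓝 (√(2 / π) * z / (√(2 / π) * z + exp (z ^ 2 / 2)))) := by
  have hc : Tendsto (fun m => √(2 / π) * t m * EW m) atTop (𝓝 (√(2 / π) * z)) := by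
    simpa using (ht.const_mul _).mul tendsto_EW
  have hB := tendsto_one_add_div_rpow_of_tendsto (ht.pow 2) (tendsto_add_div_two_div_atTop 2)
  rw [show 1 / 2 * z ^ 2 = z ^ 2 / 2 by ring] at hB
  exact hc.div (hc.add hB) (by positivity)

theorem stmt9 (α : ℝ) (hα : α ∈ Set.Ioo (0 : ℝ) 1) (tm : ℕ → ℝ)
    (htm : ∀ m : ℕ, 0 < m → 0 < tm m ∧ ∫ x in Set.Ioo (-(tm m)) (tm m), tPDF m x = 1 - α) :
    (∀ m : ℕ, 0 < m → ∃! l : ℝ, l ∈ Set.Ioo (0 : ℝ) 1 ∧ lamEq m (tm m) l) ∧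
      ∀ lam : ℕ → ℝ, (∀ m : ℕ, 0 < m → lam m ∈ Set.Ioo (0 : ℝ) 1 ∧ lamEq m (tm m) (lam m)) →
        ∃ L ∈ Set.Ioo (0 : ℝ) 1, Tendsto lam atTop (nhds L) := by
  have hsol : ∀ m, 0 < m → ∀ l ∈ Ioo (0 : ℝ) 1, lamEq m (tm m) l ↔ l = lamSol m (tm m) :=
    fun m hm l hl => lamEq_iff hm (htm m hm).1 hl
  refine ⟨fun m hm => ⟨lamSol m (tm m), ?_, fun l hl => (hsol m hm l hl.1).1 hl.2⟩,
    fun lam hlam => ?_⟩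
  · have hmem := lamSol_mem_Ioo hm (htm m hm).1
    exact ⟨hmem, (hsol m hm _ hmem).2 rfl⟩
  obtain ⟨z, hz, hGz⟩ := exists_normalCentralMass_eq (p := 1 - α)
    ⟨by linarith [hα.2], by linarith [hα.1]⟩
  have htz : Tendsto tm atTop (𝓝 z) :=
    tendsto_of_setIntegral_Ioo_tPDF_eq hz fun m hm => hGz ▸ (htm m hm).2
  refine ⟨_, div_add_mem_Ioo (by positivity) (exp_pos _), (tendsto_lamSol hz.le htz).congr' ?_⟩
  filter_upwards [eventually_gt_atTop 0] with m hm
  exact ((hsol m hm _ (hlam m hm).1).1 (hlam m hm).2).symm
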